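/- Let w ∈ S_n, and suppose u is special k-superior to w of degree p with u·t_{k,q} special (k−1)-superior to w of degree p−1 (the case where the index k occurs in a cycle of w⁻¹u). Then the associated elements coincide: v(u, w, k) = v(u·t_{k,q}, w, k−1). -/

import Mathlib

open Equiv MvPolynomial
open scoped Classical

/-- Coxeter length of a permutation of `Fin n`: the number of inversions. -/
noncomputable def len {n : ℕ} (w : Equiv.Perm (Fin n)) : ℕ :=
  (Finset.univ.filter (fun p : Fin n × Fin n => p.1 < p.2 ∧ w p.2 < w p.1)).card

/-- The simple reflection swapping the 0-based positions `a` and `a+1`;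
this is the 1-based simple reflection `s_{a+1}`. -/
def sr0 (n : ℕ) (a : ℕ) : Equiv.Perm (Fin n) :=
  if h : a + 1 < n then Equiv.swap ⟨a, Nat.lt_of_succ_lt h⟩ ⟨a + 1, h⟩ else 1

/-- `c[k,m] = s_{k-m+1} ⋯ s_{k-1} s_k` (1-based indices), with `c[k,0] = e`. -/
def cyc (n k m : ℕ) : Equiv.Perm (Fin n) :=
  ((List.range m).map (fun t => sr0 n (k - m + t))).prod

/-- The coordinate weight `L_i` (1-based), i.e. the variable `X (i-1)`. -/
noncomputable def LL (n : ℕ) (i : ℕ) : MvPolynomial (Fin n) ℚ :=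
  if h : i - 1 < n then X ⟨i - 1, h⟩ else 0

/-- The simple root `α_{a+1} = L_{a+1} - L_{a+2}` (0-based `a`). -/
noncomputable def alphaR (n a : ℕ) : MvPolynomial (Fin n) ℚ :=
  if h : a + 1 < n then X ⟨a, Nat.lt_of_succ_lt h⟩ - X ⟨a + 1, h⟩ else 0

/-- The fundamental weight `χ_i = L_1 + ⋯ + L_i` (1-based `i`). -/
noncomputable def chiW (n i : ℕ) : MvPolynomial (Fin n) ℚ :=
  ∑ j ∈ Finset.univ.filter (fun j : Fin n => (j : ℕ) < i), X j

/-- `∏_{β ∈ Δ₊ ∩ w⁻¹Δ₋} β`, the value `ξ^w(w)`. -/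
noncomputable def topVal {n : ℕ} (w : Equiv.Perm (Fin n)) : MvPolynomial (Fin n) ℚ :=
  ∏ p ∈ Finset.univ.filter (fun p : Fin n × Fin n => p.1 < p.2 ∧ w p.2 < w p.1),
    (X p.1 - X p.2)

/-- Bruhat order on the symmetric group. -/
def bruhatLE {n : ℕ} (w v : Equiv.Perm (Fin n)) : Prop :=
  Relation.ReflTransGen
    (fun x y => (∃ i j : Fin n, y = x * Equiv.swap i j) ∧ len y = len x + 1) w v

/-- The characterization of the family of equivariant Schubert classes `ξ^w : W → S(h*)`:
support condition, value at `w`, and the divided-difference recursion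
`𝒜_a ξ^w = ξ^{w s_a}` if `w s_a < w` and `0` otherwise, where
`(𝒜_a f)(v) = (f(v s_a) - f(v))/(v·α_a)`. -/
def IsXi {n : ℕ} (xi : Equiv.Perm (Fin n) → Equiv.Perm (Fin n) → MvPolynomial (Fin n) ℚ) :
    Prop :=
  (∀ w v, ¬ bruhatLE w v → xi w v = 0) ∧
  (∀ w, xi w w = topVal w) ∧
  (∀ w v (a : ℕ), a + 1 < n →
    (len (w * sr0 n a) < len w →
      xi w (v * sr0 n a) - xi w v = (rename ⇑v (alphaR n a)) * xi (w * sr0 n a) v) ∧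
    (len w < len (w * sr0 n a) → xi w (v * sr0 n a) = xi w v))

/-- The permutation `t_{i_1,q} ⋯ t_{i_s,q}` determined by the list `l = [i_1, …, i_s]`
and the index `q`. -/
def cycPerm {n : ℕ} (l : List (Fin n)) (q : Fin n) : Equiv.Perm (Fin n) :=
  (l.map (fun i => Equiv.swap i q)).prod

/-- The data `(l, q)` with `l = [i_1, …, i_s]` defines a cycle `ζ = t_{i_1,q} ⋯ t_{i_s,q}`
such that `wζ` is special `k`-superior to `w` of degree `s` (1-based `k`):
`i_1, …, i_s ≤ k < q`, `w(q) > w(i_1) > ⋯ > w(i_s)`, and `ℓ(wζ) = ℓ(w) + s`. -/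
def IsSpecialCycle {n : ℕ} (w : Equiv.Perm (Fin n)) (k : ℕ) (l : List (Fin n)) (q : Fin n) :
    Prop :=
  l ≠ [] ∧ (q :: l).Nodup ∧ (∀ i ∈ l, (i : ℕ) < k) ∧ k ≤ (q : ℕ) ∧
  (q :: l).Chain' (fun a b => w b < w a) ∧
  len (w * cycPerm l q) = len w + l.length

/-- `u` is special `k`-superior to `w` of degree `p` (1-based `k`):
`u = w ζ₁ ⋯ ζ_r` for pairwise disjoint cycles `ζ_i` as in `IsSpecialCycle`,
with degrees summing to `p`. -/
def SpecialSuperior {n : ℕ} (w u : Equiv.Perm (Fin n)) (k p : ℕ) : Prop :=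
  ∃ L : List (List (Fin n) × Fin n),
    (∀ c ∈ L, IsSpecialCycle w k c.1 c.2) ∧
    L.Pairwise (fun c d => ∀ x ∈ c.2 :: c.1, x ∉ d.2 :: d.1) ∧
    u = w * (L.map (fun c => cycPerm c.1 c.2)).prod ∧
    (L.map (fun c => c.1.length)).sum = p

/-- The set of indices of `u > w`: `𝓘 = {i ≤ k | w⁻¹u(i) ≠ i}` (stored 0-based,
so `i` ranges over 0-based positions `< k`). -/
noncomputable def idxSet {n : ℕ} (w u : Equiv.Perm (Fin n)) (k : ℕ) : Finset ℕ :=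
  (Finset.range k).filter (fun i => ∃ h : i < n, (w⁻¹ * u) ⟨i, h⟩ ≠ ⟨i, h⟩)

/-- The 0-based positions `< k` not in `𝓘`, listed in decreasing order; its `(j-1)`-st
entry is the 0-based version of `r_j`. -/
noncomputable def freeList {n : ℕ} (w u : Equiv.Perm (Fin n)) (k : ℕ) : List ℕ :=
  (((Finset.range k) \ idxSet w u k).sort (· ≤ ·)).reverse

/-- `λ_j = #{i ∈ 𝓘 | i < r_j}` (1-based `j`). -/
noncomputable def lamFn {n : ℕ} (w u : Equiv.Perm (Fin n)) (k : ℕ) (j : ℕ) : ℕ :=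
  ((idxSet w u k).filter (fun i => i < (freeList w u k).getD (j - 1) 0)).card

/-- The associated element `v(u,w,k) = w π₁ π₂ ⋯ π_{k-p}` where
`π_j = s_{λ_{k-p-j+1}+j-1} ⋯ s_{j+1} s_j` (1-based) if `λ_{k-p-j+1} ≠ 0` and `π_j = e`
otherwise. -/
noncomputable def assocElt {n : ℕ} (w u : Equiv.Perm (Fin n)) (k p : ℕ) :
    Equiv.Perm (Fin n) :=
  w * ((List.range (k - p)).map (fun j0 =>
        ((List.range (lamFn w u k (k - p - j0))).reverse.map
          (fun t => sr0 n (j0 + t))).prod)).prod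

section Aux
variable {n : ℕ}

lemma cycPerm_cons (a q : Fin n) (l : List (Fin n)) :
    cycPerm (a :: l) q = Equiv.swap a q * cycPerm l q := by
  simp [cycPerm]

lemma cycPerm_fix {l : List (Fin n)} {q x : Fin n} (hx : x ∉ q :: l) :
    cycPerm l q x = x := by
  induction l with
  | nil => rfl
  | cons a t ih =>
    simp only [List.mem_cons, not_or] at hx
    rw [cycPerm_cons, Equiv.Perm.mul_apply,
      ih (by simp only [List.mem_cons, not_or]; tauto),
      Equiv.swap_apply_of_ne_of_ne (by tauto) (by tauto)]

lemma cycPerm_mem {l : List (Fin n)} {q x : Fin n} (hx : x ∈ q :: l) :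
    cycPerm l q x ∈ q :: l := by
  by_contra h
  have h2 : cycPerm l q (cycPerm l q x) = cycPerm l q x := cycPerm_fix h
  have h3 : cycPerm l q x = x := (cycPerm l q).injective h2
  exact h (by rw [h3]; exact hx)

lemma cycPerm_moves {l : List (Fin n)} {q : Fin n} (hnd : (q :: l).Nodup)
    (hl : l ≠ []) {x : Fin n} (hx : x ∈ q :: l) : cycPerm l q x ≠ x := by
  induction l generalizing x with
  | nil => exact absurd rfl hl
  | cons a t ih =>
    simp only [List.nodup_cons, List.mem_cons, not_or] at hnd
    obtain ⟨⟨hqa, hqt⟩, hat, htnd⟩ := hnd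
    have hnd' : (q :: t).Nodup := List.nodup_cons.mpr ⟨hqt, htnd⟩
    have hanq : a ∉ q :: t := by
      simp only [List.mem_cons, not_or]
      exact ⟨fun h => hqa h.symm, hat⟩
    rw [cycPerm_cons, Equiv.Perm.mul_apply]
    rcases List.mem_cons.mp hx with hxq | hx'
    · -- x = q
      rw [hxq]
      by_cases ht : t = []
      · subst ht
        have : cycPerm ([] : List (Fin n)) q q = q := rfl
        rw [this, Equiv.swap_apply_right]
        exact fun h => hqa h.symm
      · have hy : cycPerm t q q ∈ q :: t := cycPerm_mem (List.mem_cons_self)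
        have hyne : cycPerm t q q ≠ q := ih hnd' ht (List.mem_cons_self)
        have hyt : cycPerm t q q ∈ t := by
          rcases List.mem_cons.mp hy with h | h
          · exact absurd h hyne
          · exact h
        have e1 : cycPerm t q q ≠ a := by
          intro h; rw [h] at hyt; exact hat hyt
        have e2 : cycPerm t q q ≠ q := hyne
        rw [Equiv.swap_apply_of_ne_of_ne e1 e2]
        intro h; rw [h] at hyt; exact hqt hyt
    · rcases List.mem_cons.mp hx' with hxa | hxt
      · -- x = a
        rw [hxa, cycPerm_fix hanq, Equiv.swap_apply_left]
        exact hqa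
      · -- x ∈ t
        have hy : cycPerm t q x ∈ q :: t :=
          cycPerm_mem (List.mem_cons_of_mem _ hxt)
        have hyne : cycPerm t q x ≠ x := by
          apply ih hnd' _ (List.mem_cons_of_mem _ hxt)
          intro h
          rw [h] at hxt
          exact List.not_mem_nil hxt
        rcases List.mem_cons.mp hy with hyq | hyt
        · rw [hyq, Equiv.swap_apply_right]
          intro h; rw [h] at hat; exact hat hxt
        · have e1 : cycPerm t q x ≠ a := by
            intro h; rw [h] at hyt; exact hat hyt
          have e2 : cycPerm t q x ≠ q := by
            intro h; rw [h] at hyt; exact hqt hyt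
          rw [Equiv.swap_apply_of_ne_of_ne e1 e2]
          exact hyne

lemma prod_fix {L : List (List (Fin n) × Fin n)} {x : Fin n}
    (hx : ∀ c ∈ L, x ∉ c.2 :: c.1) :
    (L.map (fun c => cycPerm c.1 c.2)).prod x = x := by
  induction L with
  | nil => rfl
  | cons c T ih =>
    simp only [List.map_cons, List.prod_cons, Equiv.Perm.mul_apply]
    rw [ih (fun d hd => hx d (List.mem_cons_of_mem _ hd)),
      cycPerm_fix (hx c (List.mem_cons_self))]

lemma prod_apply_mem {L : List (List (Fin n) × Fin n)}
    (hdisj : L.Pairwise (fun c d => ∀ x ∈ c.2 :: c.1, x ∉ d.2 :: d.1))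
    {c : List (Fin n) × Fin n} (hc : c ∈ L) {x : Fin n} (hx : x ∈ c.2 :: c.1) :
    (L.map (fun c => cycPerm c.1 c.2)).prod x = cycPerm c.1 c.2 x := by
  induction L with
  | nil => exact absurd hc List.not_mem_nil
  | cons c0 T ih =>
    rw [List.pairwise_cons] at hdisj
    simp only [List.map_cons, List.prod_cons, Equiv.Perm.mul_apply]
    rcases List.mem_cons.mp hc with rfl | hcT
    · rw [prod_fix (fun d hd => hdisj.1 d hd x hx)]
    · rw [ih hdisj.2 hcT]
      exact cycPerm_fix (fun hmem => hdisj.1 c hcT _ hmem (cycPerm_mem hx))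

lemma card_idxSet (w u : Equiv.Perm (Fin n)) (k p : ℕ)
    (h : SpecialSuperior w u k p) : (idxSet w u k).card = p := by
  obtain ⟨L, hcyc, hdisj, hu, hsum⟩ := h
  have hwu : w⁻¹ * u = (L.map (fun c => cycPerm c.1 c.2)).prod := by
    rw [hu, ← mul_assoc, inv_mul_cancel, one_mul]
  set J : List ℕ := ((L.map Prod.fst).flatten.map Fin.val) with hJ
  have hnodJ : J.Nodup := by
    apply List.Nodup.map Fin.val_injective
    rw [List.nodup_flatten]
    constructor
    · intro l' hl'
      obtain ⟨c, hc, rfl⟩ := List.mem_map.mp hl'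
      exact ((hcyc c hc).2.1).of_cons
    · refine List.Pairwise.map _ ?_ hdisj
      intro c d hcd a ha hb
      exact hcd a (List.mem_cons_of_mem _ ha) (List.mem_cons_of_mem _ hb)
  have hlenJ : J.length = p := by
    rw [hJ, List.length_map, List.length_flatten, List.map_map]
    exact hsum
  have hmem : ∀ i, i ∈ idxSet w u k ↔ i ∈ J := by
    intro i
    simp only [idxSet, Finset.mem_filter, Finset.mem_range, hJ, List.mem_map,
      List.mem_flatten]
    constructor
    · rintro ⟨hik, hin, hne⟩
      rw [hwu] at hne
      by_cases hcar : ∃ c ∈ L, (⟨i, hin⟩ : Fin n) ∈ c.2 :: c.1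
      · obtain ⟨c, hc, hmemc⟩ := hcar
        rcases List.mem_cons.mp hmemc with heq | hmemc'
        · have hkq := (hcyc c hc).2.2.2.1
          have : i = (c.2 : ℕ) := congrArg Fin.val heq
          omega
        · exact ⟨⟨i, hin⟩, ⟨c.1, ⟨c, hc, rfl⟩, hmemc'⟩, rfl⟩
      · push_neg at hcar
        exact absurd (prod_fix hcar) hne
    · rintro ⟨x, ⟨l', hl', hxl⟩, rfl⟩
      obtain ⟨c, hc, rfl⟩ := hl'
      obtain ⟨hne, hnd, hlt, hkq, -, -⟩ := hcyc c hc
      refine ⟨hlt x hxl, x.isLt, ?_⟩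
      rw [hwu]
      have hxcar : x ∈ c.2 :: c.1 := List.mem_cons_of_mem _ hxl
      have := prod_apply_mem hdisj hc hxcar
      intro hcon
      apply cycPerm_moves hnd hne hxcar
      rw [← this]
      exact hcon
  have : idxSet w u k = J.toFinset := by
    ext i; rw [hmem, List.mem_toFinset]
  rw [this, List.toFinset_card_of_nodup hnodJ, hlenJ]

end Aux

theorem stmt16 {n : ℕ} (w u : Equiv.Perm (Fin n)) (k p : ℕ) (kf q : Fin n)
    (hkf : (kf : ℕ) = k - 1) (hk1 : 1 ≤ k) (hq : k ≤ (q : ℕ))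
    (h1 : SpecialSuperior w u k p)
    (h2 : SpecialSuperior w (u * Equiv.swap kf q) (k - 1) (p - 1)) :
    assocElt w u k p = assocElt w (u * Equiv.swap kf q) (k - 1) (p - 1) := by
  have hIcard : (idxSet w u k).card = p := card_idxSet w u k p h1
  have hI'card : (idxSet w (u * Equiv.swap kf q) (k - 1)).card = p - 1 :=
    card_idxSet w _ (k - 1) (p - 1) h2
  have hpred : ∀ i, i < k - 1 → ∀ (h : i < n),
      ((w⁻¹ * (u * Equiv.swap kf q)) ⟨i, h⟩ = (w⁻¹ * u) ⟨i, h⟩) := by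
    intro i hik h
    have h1' : (⟨i, h⟩ : Fin n) ≠ kf := by
      intro he
      have := congrArg Fin.val he
      simp only [hkf] at this
      omega
    have h2' : (⟨i, h⟩ : Fin n) ≠ q := by
      intro he
      have := congrArg Fin.val he
      simp only at this
      omega
    simp only [Equiv.Perm.mul_apply, Equiv.swap_apply_of_ne_of_ne h1' h2']
  have hI'eq : idxSet w (u * Equiv.swap kf q) (k - 1)
      = (idxSet w u k).filter (· < k - 1) := by
    ext i
    simp only [idxSet, Finset.mem_filter, Finset.mem_range]
    constructor
    · rintro ⟨ha, hb, hc⟩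
      exact ⟨⟨by omega, hb, by rwa [hpred i ha hb] at hc⟩, ha⟩
    · rintro ⟨⟨ha, hb, hc⟩, hd⟩
      exact ⟨hd, hb, by rwa [hpred i hd hb]⟩
  have hIsub : ∀ i ∈ idxSet w u k, i < k := by
    intro i hi
    exact Finset.mem_range.mp (Finset.mem_of_mem_filter i hi)
  by_cases hkmem : k - 1 ∈ idxSet w u k
  · -- the index k occurs in a cycle
    have hp1 : 1 ≤ p := by
      rw [← hIcard]
      exact Finset.card_pos.mpr ⟨k - 1, hkmem⟩
    have hfree : ((Finset.range (k - 1)) \ idxSet w (u * Equiv.swap kf q) (k - 1))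
        = (Finset.range k) \ idxSet w u k := by
      rw [hI'eq]
      ext i
      simp only [Finset.mem_sdiff, Finset.mem_range, Finset.mem_filter, not_and]
      constructor
      · rintro ⟨ha, hb⟩
        exact ⟨by omega, fun hiI => absurd ha (by simpa using hb hiI)⟩
      · rintro ⟨ha, hb⟩
        have hne : i ≠ k - 1 := fun he => hb (he ▸ hkmem)
        exact ⟨by omega, fun hiI => absurd hiI hb⟩
    have hflist : freeList w (u * Equiv.swap kf q) (k - 1) = freeList w u k := by
      unfold freeList
      rw [hfree]
    have hlam : ∀ j, lamFn w (u * Equiv.swap kf q) (k - 1) j = lamFn w u k j := by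
      intro j
      unfold lamFn
      rw [hflist, hI'eq]
      set r := (freeList w u k).getD (j - 1) 0 with hr
      have hrle : r ≤ k - 1 := by
        rcases Nat.lt_or_ge (j - 1) (freeList w u k).length with hlt | hge
        · have hgm : r ∈ freeList w u k := by
            rw [hr, List.getD_eq_getElem _ _ hlt]
            exact List.getElem_mem hlt
          have : r ∈ (Finset.range k) \ idxSet w u k := by
            have := hgm
            unfold freeList at this
            rw [List.mem_reverse, Finset.mem_sort] at this
            exact this
          rw [Finset.mem_sdiff, Finset.mem_range] at this
          have hne : r ≠ k - 1 := fun he => this.2 (he ▸ hkmem)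
          omega
        · rw [hr, List.getD_eq_default _ _ hge]
          omega
      rw [Finset.filter_filter]
      congr 1
      apply Finset.filter_congr
      intro i hi
      constructor
      · intro hir
        omega
      · intro hir
        omega
    unfold assocElt
    rw [show k - 1 - (p - 1) = k - p from by omega]
    simp only [hlam]
  · -- k does not occur: then p = 0 and both idx sets are empty
    have hfull : (idxSet w u k).filter (· < k - 1) = idxSet w u k := by
      apply Finset.filter_true_of_mem
      intro i hi
      have hik := hIsub i hi
      have : i ≠ k - 1 := fun he => hkmem (he ▸ hi)
      omega
    have hp0 : p = 0 := by
      rw [hI'eq, hfull, hIcard] at hI'card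
      omega
    have hIempty : idxSet w u k = ∅ := by
      apply Finset.card_eq_zero.mp
      rw [hIcard, hp0]
    have hI'empty : idxSet w (u * Equiv.swap kf q) (k - 1) = ∅ := by
      rw [hI'eq, hIempty]
      rfl
    have hlam1 : ∀ j, lamFn w u k j = 0 := by
      intro j; unfold lamFn; rw [hIempty]; simp
    have hlam2 : ∀ j, lamFn w (u * Equiv.swap kf q) (k - 1) j = 0 := by
      intro j; unfold lamFn; rw [hI'empty]; simp
    unfold assocElt
    simp [hlam1, hlam2]
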